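/- For the von Mises distribution M_Ω on S², the Q-tensor moment satisfies ∫_{S²} (ω⊗ω − (1/3)Id) M_Ω(ω) dω = c₄ (Ω⊗Ω − (1/3)Id), where c₄ = 1 − (3/2)⟨sin²θ⟩ with ⟨g⟩ = ∫₀^π g(θ) sinθ M̃(θ) dθ / ∫₀^π sinθ M̃(θ) dθ and M̃(θ) = Z⁻¹ e^{κ cosθ}. -/

import Mathlib

open Real

/-- Parametrization of the unit sphere adapted to `Ω` via an orthonormal frame. -/
noncomputable def ωpar (Ω e₁ e₂ : Fin 3 → ℝ) (θ φ : ℝ) : Fin 3 → ℝ :=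
  fun i => Real.sin θ * Real.cos φ * e₁ i + Real.sin θ * Real.sin φ * e₂ i + Real.cos θ * Ω i

/-- `∫₀^π e^{κ cos θ} sin θ dθ`. -/
noncomputable def Zpolar (κ : ℝ) : ℝ :=
  ∫ θ in (0:ℝ)..π, Real.exp (κ * Real.cos θ) * Real.sin θ

/-- `c₄ = 1 − (3/2)⟨sin²θ⟩`, the average taken with weight `sinθ M̃(θ)`,
`M̃(θ) ∝ e^{κ cosθ}`. -/
noncomputable def cFour (κ : ℝ) : ℝ :=
  1 - (3/2) * ((∫ θ in (0:ℝ)..π, Real.sin θ ^ 2 * (Real.sin θ * Real.exp (κ * Real.cos θ))) /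
    (∫ θ in (0:ℝ)..π, Real.sin θ * Real.exp (κ * Real.cos θ)))
/-! In the frame `(e₁, e₂, Ω)` the `φ`-integral over a period kills every term of `ω ⊗ ω` that is
odd in `cos φ` or `sin φ` and replaces `cos² φ`, `sin² φ` by `π`. Since
`e₁ ⊗ e₁ + e₂ ⊗ e₂ = Id − Ω ⊗ Ω`, the azimuthal integral of the Q-tensor of `ω` is
`2π (1 − (3/2) sin² θ)` times the Q-tensor of `Ω`, and integrating this scalar against the polar
weight `e^{κ cos θ} sin θ` yields `c₄`. -/

open MeasureTheory

lemma intervalIntegral_eval {ι : Type*} [Fintype ι] {E : ι → Type*}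
    [∀ i, NormedAddCommGroup (E i)] [∀ i, NormedSpace ℝ (E i)] [∀ i, CompleteSpace (E i)]
    {f : ℝ → Π i, E i} {a b : ℝ} (hf : IntervalIntegrable f volume a b) (i : ι) :
    (∫ x in a..b, f x) i = ∫ x in a..b, f x i :=
  ((ContinuousLinearMap.proj (R := ℝ) (φ := E) i).intervalIntegral_comp_comm hf).symm

lemma integral_trig_quadratic_two_pi (A B C D E K : ℝ) :
    ∫ φ in (0:ℝ)..(2 * π), (A * cos φ ^ 2 + B * sin φ ^ 2 + C * (sin φ * cos φ)
        + D * cos φ + E * sin φ + K) = (A + B) * π + K * (2 * π) := by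
  have hderiv : ∀ x ∈ Set.uIcc (0:ℝ) (2 * π), HasDerivAt (fun φ ↦
      A * ((φ + sin φ * cos φ) / 2) + B * ((φ - sin φ * cos φ) / 2)
        + C * (sin φ ^ 2 / 2) + D * sin φ - E * cos φ + K * φ)
      (A * cos x ^ 2 + B * sin x ^ 2 + C * (sin x * cos x)
        + D * cos x + E * sin x + K) x := by
    intro x _
    have h := ((((((((hasDerivAt_id x).add ((hasDerivAt_sin x).mul
      (hasDerivAt_cos x))).div_const 2).const_mul A).add
      ((((hasDerivAt_id x).sub ((hasDerivAt_sin x).mul (hasDerivAt_cos x))).div_const 2).const_mul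
        B)).add ((((hasDerivAt_sin x).pow 2).div_const 2).const_mul C)).add
      ((hasDerivAt_sin x).const_mul D)).sub ((hasDerivAt_cos x).const_mul E)).add
      ((hasDerivAt_id x).const_mul K)
    refine h.congr_deriv ?_
    push_cast
    linear_combination (-((A + B) / 2)) * sin_sq_add_cos_sq x
  rw [intervalIntegral.integral_eq_sub_of_hasDerivAt hderiv
    (Continuous.intervalIntegrable (by fun_prop) _ _)]
  simp only [sin_two_pi, cos_two_pi, sin_zero, cos_zero]
  ring

lemma sum_mul_eq_ite_of_orthonormal {ι : Type*} [Fintype ι] [DecidableEq ι]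
    (v : ι → ι → ℝ) (hv : ∀ a b, ∑ k, v a k * v b k = if a = b then 1 else 0) (i j : ι) :
    ∑ a, v a i * v a j = if i = j then 1 else 0 := by
  have hrows : Matrix.of v * (Matrix.of v).transpose = 1 := by
    ext a b
    simpa [Matrix.mul_apply, Matrix.one_apply] using hv a b
  have hcols : (Matrix.of v).transpose * Matrix.of v = 1 := mul_eq_one_comm.mp hrows
  simpa [Matrix.mul_apply, Matrix.one_apply] using congrFun (congrFun hcols i) j

lemma orthonormal_frame_completeness (Ω e₁ e₂ : Fin 3 → ℝ)
    (h1 : ∑ i, e₁ i * e₁ i = 1) (h2 : ∑ i, e₂ i * e₂ i = 1) (hΩ : ∑ i, Ω i * Ω i = 1)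
    (h12 : ∑ i, e₁ i * e₂ i = 0) (h1Ω : ∑ i, e₁ i * Ω i = 0) (h2Ω : ∑ i, e₂ i * Ω i = 0)
    (i j : Fin 3) :
    e₁ i * e₁ j + e₂ i * e₂ j + Ω i * Ω j = if i = j then 1 else 0 := by
  have hv : ∀ a b, ∑ k, ![e₁, e₂, Ω] a k * ![e₁, e₂, Ω] b k = if a = b then 1 else 0 := by
    intro a b
    fin_cases a <;> fin_cases b <;>
      simp [h1, h2, hΩ, h12, h1Ω, h2Ω, mul_comm (Ω _), mul_comm (e₂ _) (e₁ _)]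
  simpa [Fin.sum_univ_three] using sum_mul_eq_ite_of_orthonormal _ hv i j

noncomputable def qTensor (v : Fin 3 → ℝ) : Fin 3 → Fin 3 → ℝ :=
  fun i j ↦ v i * v j - (1/3) * (if i = j then (1:ℝ) else 0)

lemma continuous_ωpar (Ω e₁ e₂ : Fin 3 → ℝ) (θ : ℝ) : Continuous (ωpar Ω e₁ e₂ θ) := by
  unfold ωpar
  fun_prop

lemma integral_qTensor_ωpar (Ω e₁ e₂ : Fin 3 → ℝ)
    (h1 : ∑ i, e₁ i * e₁ i = 1) (h2 : ∑ i, e₂ i * e₂ i = 1) (hΩ : ∑ i, Ω i * Ω i = 1)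
    (h12 : ∑ i, e₁ i * e₂ i = 0) (h1Ω : ∑ i, e₁ i * Ω i = 0) (h2Ω : ∑ i, e₂ i * Ω i = 0)
    (θ : ℝ) :
    ∫ φ in (0:ℝ)..(2 * π), qTensor (ωpar Ω e₁ e₂ θ φ)
      = (2 * π * (1 - 3/2 * sin θ ^ 2)) • qTensor Ω := by
  have hcont : Continuous fun φ ↦ qTensor (ωpar Ω e₁ e₂ θ φ) := by
    have := continuous_ωpar Ω e₁ e₂ θ
    unfold qTensor
    fun_prop
  ext i j
  rw [intervalIntegral_eval (hcont.intervalIntegrable _ _),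
    intervalIntegral_eval (f := fun φ ↦ qTensor (ωpar Ω e₁ e₂ θ φ) i)
      (((continuous_apply i).comp hcont).intervalIntegrable _ _)]
  have hexpand : (fun φ ↦ qTensor (ωpar Ω e₁ e₂ θ φ) i j) = fun φ ↦
      sin θ ^ 2 * (e₁ i * e₁ j) * cos φ ^ 2 + sin θ ^ 2 * (e₂ i * e₂ j) * sin φ ^ 2
        + sin θ ^ 2 * (e₁ i * e₂ j + e₂ i * e₁ j) * (sin φ * cos φ)
        + sin θ * cos θ * (e₁ i * Ω j + Ω i * e₁ j) * cos φ
        + sin θ * cos θ * (e₂ i * Ω j + Ω i * e₂ j) * sin φ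
        + (cos θ ^ 2 * (Ω i * Ω j) - 1/3 * (if i = j then (1:ℝ) else 0)) := by
    funext φ
    simp only [qTensor, ωpar]
    ring
  rw [hexpand, integral_trig_quadratic_two_pi]
  simp only [qTensor, Pi.smul_apply, smul_eq_mul]
  linear_combination (π * sin θ ^ 2) *
      orthonormal_frame_completeness Ω e₁ e₂ h1 h2 hΩ h12 h1Ω h2Ω i j
    + (2 * π * (Ω i * Ω j)) * sin_sq_add_cos_sq θ

lemma Zpolar_pos (κ : ℝ) : 0 < Zpolar κ :=
  intervalIntegral.intervalIntegral_pos_of_pos_on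
    (Continuous.intervalIntegrable (by fun_prop) _ _)
    (fun _ hθ ↦ mul_pos (exp_pos _) (sin_pos_of_pos_of_lt_pi hθ.1 hθ.2)) pi_pos

lemma cFour_eq (κ : ℝ) :
    cFour κ = (2 * π * Zpolar κ)⁻¹ *
      ∫ θ in (0:ℝ)..π, exp (κ * cos θ) * sin θ * (2 * π * (1 - 3/2 * sin θ ^ 2)) := by
  have hZ : (∫ θ in (0:ℝ)..π, sin θ * exp (κ * cos θ)) = Zpolar κ := by
    simp only [Zpolar, mul_comm (sin _)]
  have hsplit : (∫ θ in (0:ℝ)..π, exp (κ * cos θ) * sin θ * (2 * π * (1 - 3/2 * sin θ ^ 2)))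
      = 2 * π * Zpolar κ
        - 3 * π * ∫ θ in (0:ℝ)..π, sin θ ^ 2 * (sin θ * exp (κ * cos θ)) := by
    rw [← hZ, ← intervalIntegral.integral_const_mul, ← intervalIntegral.integral_const_mul,
      ← intervalIntegral.integral_sub (Continuous.intervalIntegrable (by fun_prop) _ _)
        (Continuous.intervalIntegrable (by fun_prop) _ _)]
    congr 1
    funext θ
    ring
  have hZ0 := (Zpolar_pos κ).ne'
  rw [cFour, hsplit, hZ]
  field_simp

theorem stmt7_general (κ : ℝ) (Ω e₁ e₂ : Fin 3 → ℝ)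
    (h1 : ∑ i, e₁ i * e₁ i = 1) (h2 : ∑ i, e₂ i * e₂ i = 1) (hΩ : ∑ i, Ω i * Ω i = 1)
    (h12 : ∑ i, e₁ i * e₂ i = 0) (h1Ω : ∑ i, e₁ i * Ω i = 0) (h2Ω : ∑ i, e₂ i * Ω i = 0) :
    ((2 * π * Zpolar κ)⁻¹ • (∫ θ in (0:ℝ)..π, ∫ φ in (0:ℝ)..(2 * π),
        (Real.exp (κ * Real.cos θ) * Real.sin θ) •
          (fun i j => ωpar Ω e₁ e₂ θ φ i * ωpar Ω e₁ e₂ θ φ j -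
            (1/3) * (if i = j then (1:ℝ) else 0) : Fin 3 → Fin 3 → ℝ)))
      = cFour κ • (fun i j => Ω i * Ω j - (1/3) * (if i = j then (1:ℝ) else 0)) := by
  change (2 * π * Zpolar κ)⁻¹ • (∫ θ in (0:ℝ)..π, ∫ φ in (0:ℝ)..(2 * π),
      (exp (κ * cos θ) * sin θ) • qTensor (ωpar Ω e₁ e₂ θ φ)) = cFour κ • qTensor Ω
  simp_rw [intervalIntegral.integral_smul, integral_qTensor_ωpar Ω e₁ e₂ h1 h2 hΩ h12 h1Ω h2Ω,
    smul_smul, intervalIntegral.integral_smul_const, smul_smul, cFour_eq]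

/-- Q-tensor moment of the von Mises distribution:
`∫_{S²} (ω⊗ω − Id/3) M_Ω dω = c₄ (Ω⊗Ω − Id/3)`. -/
theorem stmt7 (κ : ℝ) (hκ : 0 < κ) (Ω e₁ e₂ : Fin 3 → ℝ)
    (h1 : ∑ i, e₁ i * e₁ i = 1) (h2 : ∑ i, e₂ i * e₂ i = 1) (hΩ : ∑ i, Ω i * Ω i = 1)
    (h12 : ∑ i, e₁ i * e₂ i = 0) (h1Ω : ∑ i, e₁ i * Ω i = 0) (h2Ω : ∑ i, e₂ i * Ω i = 0) :
    ((2 * π * Zpolar κ)⁻¹ • (∫ θ in (0:ℝ)..π, ∫ φ in (0:ℝ)..(2 * π),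
        (Real.exp (κ * Real.cos θ) * Real.sin θ) •
          (fun i j => ωpar Ω e₁ e₂ θ φ i * ωpar Ω e₁ e₂ θ φ j -
            (1/3) * (if i = j then (1:ℝ) else 0) : Fin 3 → Fin 3 → ℝ)))
      = cFour κ • (fun i j => Ω i * Ω j - (1/3) * (if i = j then (1:ℝ) else 0)) :=
  stmt7_general κ Ω e₁ e₂ h1 h2 hΩ h12 h1Ω h2Ω
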